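/- arXiv:2605.06493 — 3 statements merged into one kernel-verified Lean document; each statement's English description precedes it below -/
import Mathlib

section
/- Assume that A_p and A_c have no common complex eigenvalue. Then the pair (F̄(π), H̄(π)) is PBH-unobservable if and only if at least one of the following holds: (i) there exist s ∈ ℂ and a nonzero w_p ∈ ℂ^{n_p} with A_p w_p = s·w_p and π^⊤ Q_p w_p = 0; or (ii) there exist λ ∈ ℂ and a nonzero w_c ∈ ℂ^{n_c} with A_c w_c = λ·w_c and π^⊤ Q_p (λ·I − A_p)^{−1} B_p C_c w_c = 0 (the matrix λ·I − A_p being invertible since λ is an eigenvalue of A_c and the spectra of A_p and A_c are disjoint). -/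
open Matrix
noncomputable section

/-- PBH unobservability for a pair (F, H) with scalar output. -/
def PBHUnobservable {ι : Type*} [Fintype ι] (F : Matrix ι ι ℝ) (H : Matrix (Fin 1) ι ℝ) : Prop :=
  ∃ (s : ℂ) (w : ι → ℂ), w ≠ 0 ∧ (F.map Complex.ofReal) *ᵥ w = s • w ∧
    (H.map Complex.ofReal) *ᵥ w = 0

variable {np nc : ℕ}

/-- `A = [[A_p, B_p C_c],[0, A_c]]`. -/
def Amat (Ap : Matrix (Fin np) (Fin np) ℝ) (Ac : Matrix (Fin nc) (Fin nc) ℝ)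
    (Bp : Matrix (Fin np) (Fin 1) ℝ) (Cc : Matrix (Fin 1) (Fin nc) ℝ) :
    Matrix (Fin np ⊕ Fin nc) (Fin np ⊕ Fin nc) ℝ :=
  Matrix.fromBlocks Ap (Bp * Cc) 0 Ac

/-- `B = [B_p D_c; B_c]`. -/
def Bmat (Bp : Matrix (Fin np) (Fin 1) ℝ) (Bc : Matrix (Fin nc) (Fin 1) ℝ) (Dc : ℝ) :
    Matrix (Fin np ⊕ Fin nc) (Fin 1) ℝ :=
  Matrix.fromRows (Dc • Bp) Bc

/-- `H̄(π) = [2 π^⊤ Q_p, 0]`. -/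
def Hbar (Qp : Matrix (Fin np) (Fin np) ℝ) (π : Fin np → ℝ) :
    Matrix (Fin 1) (Fin np ⊕ Fin nc) ℝ :=
  Matrix.of fun _ j => Sum.elim (fun i => 2 * (π ᵥ* Qp) i) (fun _ => 0) j

/-- `F̄(π) = A + B H̄(π)`. -/
def Fbar (Ap : Matrix (Fin np) (Fin np) ℝ) (Ac : Matrix (Fin nc) (Fin nc) ℝ)
    (Bp : Matrix (Fin np) (Fin 1) ℝ) (Bc : Matrix (Fin nc) (Fin 1) ℝ)
    (Cc : Matrix (Fin 1) (Fin nc) ℝ) (Dc : ℝ)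
    (Qp : Matrix (Fin np) (Fin np) ℝ) (π : Fin np → ℝ) :
    Matrix (Fin np ⊕ Fin nc) (Fin np ⊕ Fin nc) ℝ :=
  Amat Ap Ac Bp Cc + Bmat Bp Bc Dc * Hbar Qp π

private lemma elim_smul (s : ℂ) (x : Fin np → ℂ) (y : Fin nc → ℂ) :
    Sum.elim (s • x) (s • y) = s • Sum.elim x y := by
  funext i; cases i <;> rfl

/-- The action of the complexified `Hbar` row on a vector. -/
private lemma hbar_map_mulVec (Qp : Matrix (Fin np) (Fin np) ℝ) (π : Fin np → ℝ)
    (w : Fin np ⊕ Fin nc → ℂ) :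
    ((Hbar Qp π : Matrix (Fin 1) (Fin np ⊕ Fin nc) ℝ).map Complex.ofReal *ᵥ w) =
      fun _ => 2 * ((fun i => (π i : ℂ)) ⬝ᵥ ((Qp.map Complex.ofReal) *ᵥ (w ∘ Sum.inl))) := by
  funext x
  show (fun j => Complex.ofReal ((Hbar Qp π : Matrix (Fin 1) (Fin np ⊕ Fin nc) ℝ) x j)) ⬝ᵥ w = _
  have hrow : (fun j => Complex.ofReal ((Hbar Qp π : Matrix (Fin 1) (Fin np ⊕ Fin nc) ℝ) x j)) =
      Sum.elim (fun i => 2 * (((fun k => (π k : ℂ))) ᵥ* Qp.map Complex.ofReal) i)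
        (fun _ => (0 : ℂ)) := by
    funext j
    cases j with
    | inl i =>
      show ((2 * (π ᵥ* Qp) i : ℝ) : ℂ)
          = 2 * ((fun k => ((π k : ℂ))) ᵥ* Qp.map Complex.ofReal) i
      simp only [Matrix.vecMul, dotProduct, Matrix.map_apply]
      push_cast
      ring
    | inr i => simp [Hbar]
  rw [hrow]
  conv_lhs => rw [← Sum.elim_comp_inl_inr w]
  rw [sumElim_dotProduct_sumElim]
  have h0 : (fun _ : Fin nc => (0:ℂ)) ⬝ᵥ (w ∘ Sum.inr) = 0 := by
    simp [dotProduct]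
  rw [h0, add_zero, Matrix.dotProduct_mulVec, dotProduct, dotProduct,
    Finset.mul_sum]
  exact Finset.sum_congr rfl fun i _ => by ring

/-- under disjoint spectra of `A_p` and `A_c`, the pair `(F̄(π), H̄(π))` is
PBH-unobservable iff (i) some eigenvector of `A_p` is annihilated by `π^⊤ Q_p`, or
(ii) some eigenpair `(λ, w_c)` of `A_c` satisfies `π^⊤ Q_p (λI − A_p)⁻¹ B_p C_c w_c = 0`. -/
theorem pbh_unobservable_iff_hyperplane_conditions
    (Ap : Matrix (Fin np) (Fin np) ℝ) (Ac : Matrix (Fin nc) (Fin nc) ℝ)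
    (Bp : Matrix (Fin np) (Fin 1) ℝ) (Bc : Matrix (Fin nc) (Fin 1) ℝ)
    (Cc : Matrix (Fin 1) (Fin nc) ℝ) (Dc : ℝ)
    (Qp : Matrix (Fin np) (Fin np) ℝ) (hQp : Qp.IsSymm) (π : Fin np → ℝ)
    (hdisj : ∀ s : ℂ,
      ¬((∃ wp : Fin np → ℂ, wp ≠ 0 ∧ (Ap.map Complex.ofReal) *ᵥ wp = s • wp) ∧
        (∃ wc : Fin nc → ℂ, wc ≠ 0 ∧ (Ac.map Complex.ofReal) *ᵥ wc = s • wc))) :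
    PBHUnobservable (Fbar Ap Ac Bp Bc Cc Dc Qp π) (Hbar Qp π) ↔
      ((∃ (s : ℂ) (wp : Fin np → ℂ), wp ≠ 0 ∧ (Ap.map Complex.ofReal) *ᵥ wp = s • wp ∧
          (fun i => (π i : ℂ)) ⬝ᵥ ((Qp.map Complex.ofReal) *ᵥ wp) = 0) ∨
        (∃ (l : ℂ) (wc : Fin nc → ℂ), wc ≠ 0 ∧ (Ac.map Complex.ofReal) *ᵥ wc = l • wc ∧
          (fun i => (π i : ℂ)) ⬝ᵥ
            (((Qp.map Complex.ofReal) *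
                (l • (1 : Matrix (Fin np) (Fin np) ℂ) - Ap.map Complex.ofReal)⁻¹ *
                ((Bp * Cc).map Complex.ofReal)) *ᵥ wc) = 0)) := by
  classical
  set Apc := Ap.map Complex.ofReal with hApc
  set Acc := Ac.map Complex.ofReal with hAcc
  set Gc := (Bp * Cc).map Complex.ofReal with hGc
  set Qpc := Qp.map Complex.ofReal with hQpc
  set πc : Fin np → ℂ := fun i => (π i : ℂ) with hπc
  have hAmap : (Amat Ap Ac Bp Cc).map Complex.ofReal = Matrix.fromBlocks Apc Gc 0 Acc := by
    unfold Amat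
    rw [Matrix.fromBlocks_map, Matrix.map_zero _ Complex.ofReal_zero]
  have hBH : ∀ w : Fin np ⊕ Fin nc → ℂ,
      (Hbar Qp π).map Complex.ofReal *ᵥ w = 0 →
      (Fbar Ap Ac Bp Bc Cc Dc Qp π).map Complex.ofReal *ᵥ w
        = (Amat Ap Ac Bp Cc).map Complex.ofReal *ᵥ w := by
    intro w hw
    unfold Fbar
    rw [Matrix.map_add Complex.ofReal Complex.ofReal_add, Matrix.add_mulVec]
    have hmul : ((Bmat Bp Bc Dc * (Hbar Qp π : Matrix (Fin 1) (Fin np ⊕ Fin nc) ℝ)).map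
          Complex.ofReal)
        = (Bmat Bp Bc Dc).map Complex.ofReal *
            (Hbar Qp π : Matrix (Fin 1) (Fin np ⊕ Fin nc) ℝ).map Complex.ofReal :=
      Matrix.map_mul (f := Complex.ofRealHom)
    rw [hmul, ← Matrix.mulVec_mulVec, hw, Matrix.mulVec_zero, add_zero]
  have hinv : ∀ s : ℂ, (∃ wc : Fin nc → ℂ, wc ≠ 0 ∧ Acc *ᵥ wc = s • wc) →
      IsUnit (s • (1 : Matrix (Fin np) (Fin np) ℂ) - Apc).det := by
    intro s hc
    rw [isUnit_iff_ne_zero]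
    intro hdet
    obtain ⟨v, hv, hv0⟩ := Matrix.exists_mulVec_eq_zero_iff.2 hdet
    refine hdisj s ⟨⟨v, hv, ?_⟩, hc⟩
    rw [Matrix.sub_mulVec, Matrix.smul_mulVec, Matrix.one_mulVec, sub_eq_zero] at hv0
    exact hv0.symm
  constructor
  · rintro ⟨s, w, hw0, hFw, hHw⟩
    have hAw : (Amat Ap Ac Bp Cc).map Complex.ofReal *ᵥ w = s • w := by
      rw [← hBH w hHw]; exact hFw
    set wp := w ∘ Sum.inl with hwp'
    set wc := w ∘ Sum.inr with hwc'
    have hwelim : w = Sum.elim wp wc := (Sum.elim_comp_inl_inr w).symm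
    rw [hwelim, hAmap, Matrix.fromBlocks_mulVec, ← elim_smul] at hAw
    simp only [Sum.elim_comp_inl, Sum.elim_comp_inr] at hAw
    have h1 : Apc *ᵥ wp + Gc *ᵥ wc = s • wp := funext fun i => congrFun hAw (Sum.inl i)
    have h2 : (0 : Matrix (Fin nc) (Fin np) ℂ) *ᵥ wp + Acc *ᵥ wc = s • wc :=
      funext fun i => congrFun hAw (Sum.inr i)
    rw [Matrix.zero_mulVec, zero_add] at h2
    rw [hbar_map_mulVec] at hHw
    have hπ : πc ⬝ᵥ (Qpc *ᵥ wp) = 0 := by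
      have := congrFun hHw 0
      simp only [Pi.zero_apply, mul_eq_zero] at this
      rcases this with h | h
      · norm_num at h
      · exact h
    by_cases hwc : wc = 0
    · left
      refine ⟨s, wp, ?_, ?_, hπ⟩
      · intro h
        apply hw0
        rw [hwelim, h, hwc]
        funext i; cases i <;> rfl
      · rw [hwc, Matrix.mulVec_zero, add_zero] at h1; exact h1
    · right
      have hu := hinv s ⟨wc, hwc, h2⟩
      set M := s • (1 : Matrix (Fin np) (Fin np) ℂ) - Apc with hM'
      have hM : M *ᵥ wp = Gc *ᵥ wc := by
        rw [hM', Matrix.sub_mulVec, Matrix.smul_mulVec, Matrix.one_mulVec,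
          sub_eq_iff_eq_add, ← h1]
        exact add_comm _ _
      have hwp : wp = M⁻¹ *ᵥ (Gc *ᵥ wc) := by
        rw [← hM, Matrix.mulVec_mulVec, Matrix.nonsing_inv_mul _ hu, Matrix.one_mulVec]
      refine ⟨s, wc, hwc, h2, ?_⟩
      rw [← Matrix.mulVec_mulVec, ← Matrix.mulVec_mulVec, ← hwp]
      exact hπ
  · rintro (⟨s, wp, hwp0, hev, hπ⟩ | ⟨l, wc, hwc0, hev, hπ⟩)
    · refine ⟨s, Sum.elim wp 0, ?_, ?_, ?_⟩
      · intro h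
        apply hwp0
        funext i
        exact congrFun h (Sum.inl i)
      · have hH : (Hbar Qp π).map Complex.ofReal *ᵥ Sum.elim wp (0 : Fin nc → ℂ) = 0 := by
          rw [hbar_map_mulVec]
          funext x
          simp only [Sum.elim_comp_inl]
          rw [hπ, mul_zero]
          rfl
        rw [hBH _ hH, hAmap, Matrix.fromBlocks_mulVec, ← elim_smul]
        simp only [Sum.elim_comp_inl, Sum.elim_comp_inr]
        funext i
        cases i with
        | inl i =>
          show (Apc *ᵥ wp + Gc *ᵥ (0 : Fin nc → ℂ)) i = (s • wp) i
          rw [Matrix.mulVec_zero, add_zero, hev]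
        | inr i =>
          show ((0 : Matrix (Fin nc) (Fin np) ℂ) *ᵥ wp + Acc *ᵥ (0 : Fin nc → ℂ)) i
              = (s • (0 : Fin nc → ℂ)) i
          rw [Matrix.zero_mulVec, Matrix.mulVec_zero, zero_add, smul_zero]
      · rw [hbar_map_mulVec]
        funext x
        simp only [Sum.elim_comp_inl]
        rw [hπ, mul_zero]
        rfl
    · have hu := hinv l ⟨wc, hwc0, hev⟩
      set M := l • (1 : Matrix (Fin np) (Fin np) ℂ) - Apc with hM'
      set wp : Fin np → ℂ := M⁻¹ *ᵥ (Gc *ᵥ wc) with hwp'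
      have hMwp : M *ᵥ wp = Gc *ᵥ wc := by
        rw [hwp', Matrix.mulVec_mulVec, Matrix.mulVec_mulVec,
          Matrix.mul_nonsing_inv _ hu, Matrix.one_mul]
      have hπ' : πc ⬝ᵥ (Qpc *ᵥ wp) = 0 := by
        rw [← hπ, ← Matrix.mulVec_mulVec, ← Matrix.mulVec_mulVec, ← hwp']
      have hH : (Hbar Qp π).map Complex.ofReal *ᵥ Sum.elim wp wc = 0 := by
        rw [hbar_map_mulVec]
        funext x
        simp only [Sum.elim_comp_inl]
        rw [hπ', mul_zero]
        rfl
      refine ⟨l, Sum.elim wp wc, ?_, ?_, hH⟩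
      · intro h
        apply hwc0
        funext i
        exact congrFun h (Sum.inr i)
      · rw [hBH _ hH, hAmap, Matrix.fromBlocks_mulVec, ← elim_smul]
        simp only [Sum.elim_comp_inl, Sum.elim_comp_inr]
        funext i
        cases i with
        | inl i =>
          show (Apc *ᵥ wp + Gc *ᵥ wc) i = (l • wp) i
          rw [← hMwp, hM', Matrix.sub_mulVec, Matrix.smul_mulVec, Matrix.one_mulVec]
          simp only [Pi.add_apply, Pi.sub_apply]
          ring
        | inr i =>
          show ((0 : Matrix (Fin nc) (Fin np) ℂ) *ᵥ wp + Acc *ᵥ wc) i = (l • wc) i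
          rw [Matrix.zero_mulVec, zero_add, hev]
end
end

section
/- Let A ∈ ℝ^{n×n}, B ∈ ℝ^{n×1}, and let H ∈ ℝ^{1×n} be a row vector. Suppose Y ∈ ℝ^{n×n} is symmetric positive definite and S ∈ ℝ^{n×n} is symmetric positive definite with A^⊤S + SA = −Y. If 2‖SB‖·‖H‖ < λ_min(Y), where λ_min(Y) is the smallest eigenvalue of Y and ‖·‖ denotes the spectral (operator 2-) norm, then the matrix A + BH is Hurwitz. -/
open Matrix
noncomputable section

/-- A real square matrix is Hurwitz if every complex eigenvalue has strictly negative
real part. -/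
def IsHurwitz {ι : Type*} [Fintype ι] (M : Matrix ι ι ℝ) : Prop :=
  ∀ (μ : ℂ) (v : ι → ℂ), v ≠ 0 → (M.map Complex.ofReal) *ᵥ v = μ • v → μ.re < 0

/-- Spectral norm: operator norm induced by the Euclidean norms. -/
def opNorm {m n : Type*} [Fintype m] [Fintype n] [DecidableEq n] (M : Matrix m n ℝ) : ℝ :=
  ‖(Matrix.toEuclideanLin M).toContinuousLinearMap‖

/-! For an eigenpair `(μ, v)` of a real matrix `M`, write `v = a + i b`. Then
`aᵀ S M a + bᵀ S M b = Re μ · (aᵀ S a + bᵀ S b)`, the cross terms cancelling by symmetry of `S`;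
so `Re μ < 0` as soon as `S` is positive definite and `x ↦ xᵀ S M x` is negative definite.
For `M = A + B H` the Lyapunov equation gives `2 xᵀ S A x = -xᵀ Y x ≤ -λ_min(Y) |x|²`, while
`xᵀ (S B) H x ≤ ‖S B‖ ‖H‖ |x|²`, and the smallness hypothesis makes the sum negative. -/

namespace Matrix

variable {ι κ : Type*} [Fintype ι] [Fintype κ]

open scoped MatrixOrder in
theorem IsHermitian.iInf_eigenvalues_mul_dotProduct_self_le [DecidableEq ι] {Y : Matrix ι ι ℝ}
    (hY : Y.IsHermitian) (x : ι → ℝ) : (⨅ i, hY.eigenvalues i) * (x ⬝ᵥ x) ≤ x ⬝ᵥ Y *ᵥ x := by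
  have hpsd : (Y - (⨅ i, hY.eigenvalues i) • 1).PosSemidef := by
    rw [← le_iff, ← Algebra.algebraMap_eq_smul_one,
      algebraMap_le_iff_le_spectrum (a := Y) hY.isSelfAdjoint, hY.spectrum_real_eq_range_eigenvalues]
    rintro _ ⟨i, rfl⟩
    exact ciInf_le (Set.finite_range _).bddBelow i
  have := hpsd.dotProduct_mulVec_nonneg x
  simp only [star_trivial, sub_mulVec, smul_mulVec, one_mulVec, dotProduct_sub,
    dotProduct_smul, smul_eq_mul] at this
  linarith

theorem dotProduct_transpose_mul_add_mul_mulVec {S : Matrix ι ι ℝ} (hS : S.IsSymm)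
    (M : Matrix ι ι ℝ) (x : ι → ℝ) :
    x ⬝ᵥ (Mᵀ * S + S * M) *ᵥ x = 2 * (x ⬝ᵥ (S * M) *ᵥ x) := by
  rw [add_mulVec, dotProduct_add, ← dotProduct_transpose_mulVec (Mᵀ * S) x x, transpose_mul,
    transpose_transpose, hS.eq, two_mul]

theorem norm_toLp_mulVec_le_opNorm [DecidableEq κ] (M : Matrix ι κ ℝ) (x : κ → ℝ) :
    ‖WithLp.toLp 2 (M *ᵥ x)‖ ≤ opNorm M * ‖WithLp.toLp 2 x‖ :=
  (toEuclideanLin M).toContinuousLinearMap.le_opNorm (WithLp.toLp 2 x)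

theorem dotProduct_mul_mulVec_le_opNorm_mul_opNorm [DecidableEq ι] [DecidableEq κ]
    (F : Matrix ι κ ℝ) (G : Matrix κ ι ℝ) (x : ι → ℝ) :
    x ⬝ᵥ (F * G) *ᵥ x ≤ opNorm F * opNorm G * (x ⬝ᵥ x) := by
  have hxx : x ⬝ᵥ x = ‖WithLp.toLp 2 x‖ ^ 2 := by
    rw [← real_inner_self_eq_norm_sq, EuclideanSpace.inner_toLp_toLp, star_trivial]
  calc x ⬝ᵥ (F * G) *ᵥ x = inner ℝ (WithLp.toLp 2 x) (WithLp.toLp 2 (F *ᵥ G *ᵥ x)) := by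
        rw [EuclideanSpace.inner_toLp_toLp, star_trivial, dotProduct_comm, mulVec_mulVec]
    _ ≤ ‖WithLp.toLp 2 x‖ * ‖WithLp.toLp 2 (F *ᵥ G *ᵥ x)‖ := real_inner_le_norm _ _
    _ ≤ ‖WithLp.toLp 2 x‖ * (opNorm F * (opNorm G * ‖WithLp.toLp 2 x‖)) := by
        gcongr
        refine (norm_toLp_mulVec_le_opNorm F _).trans ?_
        gcongr
        · exact norm_nonneg _
        · exact norm_toLp_mulVec_le_opNorm G x
    _ = opNorm F * opNorm G * (x ⬝ᵥ x) := by rw [hxx]; ring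

theorem mulVec_re_of_map_ofReal_mulVec_eq_smul {M : Matrix ι ι ℝ} {μ : ℂ} {v : ι → ℂ}
    (hv : M.map Complex.ofReal *ᵥ v = μ • v) :
    M *ᵥ (fun i ↦ (v i).re) = μ.re • (fun i ↦ (v i).re) - μ.im • (fun i ↦ (v i).im) := by
  funext j
  simpa [mulVec, dotProduct, Complex.mul_re] using congrArg Complex.re (congrFun hv j)

theorem mulVec_im_of_map_ofReal_mulVec_eq_smul {M : Matrix ι ι ℝ} {μ : ℂ} {v : ι → ℂ}
    (hv : M.map Complex.ofReal *ᵥ v = μ • v) :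
    M *ᵥ (fun i ↦ (v i).im) = μ.im • (fun i ↦ (v i).re) + μ.re • (fun i ↦ (v i).im) := by
  funext j
  simpa [mulVec, dotProduct, Complex.mul_im, add_comm] using congrArg Complex.im (congrFun hv j)

end Matrix

theorem isHurwitz_of_posDef_of_dotProduct_mul_mulVec_neg {ι : Type*} [Fintype ι]
    {M S : Matrix ι ι ℝ} (hS : S.PosDef) (hM : ∀ x ≠ 0, x ⬝ᵥ (S * M) *ᵥ x < 0) :
    IsHurwitz M := by
  intro μ v hv hev
  set a : ι → ℝ := fun i ↦ (v i).re
  set b : ι → ℝ := fun i ↦ (v i).im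
  have hab : a ≠ 0 ∨ b ≠ 0 := by
    by_contra! h
    exact hv (funext fun i ↦ Complex.ext (congrFun h.1 i) (congrFun h.2 i))
  have ha : M *ᵥ a = μ.re • a - μ.im • b := mulVec_re_of_map_ofReal_mulVec_eq_smul hev
  have hb : M *ᵥ b = μ.im • a + μ.re • b := mulVec_im_of_map_ofReal_mulVec_eq_smul hev
  have hSM_nonpos : ∀ x, x ⬝ᵥ (S * M) *ᵥ x ≤ 0 := fun x ↦ by
    rcases eq_or_ne x 0 with rfl | hx
    · simp
    · exact (hM x hx).le
  have hS_nonneg : ∀ x, 0 ≤ x ⬝ᵥ S *ᵥ x := fun x ↦ by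
    simpa using hS.posSemidef.dotProduct_mulVec_nonneg x
  have hS_pos : ∀ x ≠ 0, 0 < x ⬝ᵥ S *ᵥ x := fun x hx ↦ by
    simpa using hS.dotProduct_mulVec_pos hx
  have hS_symm : b ⬝ᵥ S *ᵥ a = a ⬝ᵥ S *ᵥ b := by
    rw [← dotProduct_transpose_mulVec, (isHermitian_iff_isSymm.mp hS.1).eq]
  have hsum : a ⬝ᵥ (S * M) *ᵥ a + b ⬝ᵥ (S * M) *ᵥ b = μ.re * (a ⬝ᵥ S *ᵥ a + b ⬝ᵥ S *ᵥ b) := by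
    simp only [← mulVec_mulVec, ha, hb, mulVec_sub, mulVec_add, mulVec_smul, dotProduct_sub,
      dotProduct_add, dotProduct_smul, smul_eq_mul, hS_symm]
    ring
  have hneg : a ⬝ᵥ (S * M) *ᵥ a + b ⬝ᵥ (S * M) *ᵥ b < 0 := by
    rcases hab with h | h
    · linarith [hM a h, hSM_nonpos b]
    · linarith [hSM_nonpos a, hM b h]
  have hpos : 0 < a ⬝ᵥ S *ᵥ a + b ⬝ᵥ S *ᵥ b := by
    rcases hab with h | h
    · linarith [hS_pos a h, hS_nonneg b]
    · linarith [hS_nonneg a, hS_pos b h]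
  exact neg_of_mul_neg_left (hsum ▸ hneg) hpos.le

/-- if `A^⊤S + SA = −Y` with `S, Y` symmetric positive definite and
`2‖SB‖‖H‖ < λ_min(Y)`, then `A + BH` is Hurwitz. -/
theorem hurwitz_of_small_output_injection
    (n : ℕ) (A : Matrix (Fin n) (Fin n) ℝ) (B : Matrix (Fin n) (Fin 1) ℝ)
    (H : Matrix (Fin 1) (Fin n) ℝ)
    (Y S : Matrix (Fin n) (Fin n) ℝ) (hY : Y.PosDef) (hS : S.PosDef)
    (hLyap : Aᵀ * S + S * A = -Y)
    (hsmall : 2 * opNorm (S * B) * opNorm H < ⨅ i, hY.1.eigenvalues i) :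
    IsHurwitz (A + B * H) := by
  refine isHurwitz_of_posDef_of_dotProduct_mul_mulVec_neg hS fun x hx ↦ ?_
  have hA : 2 * (x ⬝ᵥ (S * A) *ᵥ x) = -(x ⬝ᵥ Y *ᵥ x) := by
    rw [← dotProduct_transpose_mul_add_mul_mulVec (isHermitian_iff_isSymm.mp hS.1), hLyap,
      neg_mulVec, dotProduct_neg]
  have hY_ge := hY.1.iInf_eigenvalues_mul_dotProduct_self_le x
  have hBH_le := dotProduct_mul_mulVec_le_opNorm_mul_opNorm (S * B) H x
  have hgap := mul_neg_of_neg_of_pos (sub_neg.2 hsmall)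
    (by simpa using dotProduct_self_star_pos_iff.2 hx)
  rw [mul_add, ← Matrix.mul_assoc, add_mulVec, dotProduct_add]
  linarith
end
end

section
/- Assume A is Hurwitz. Let Y ∈ ℝ^{n×n} be symmetric positive definite and let S ∈ ℝ^{n×n} be symmetric positive definite with A^⊤S + SA = −Y. Let π* ∈ ℝ^{n_p} with Q_p π* ≠ 0, and let γ be a real number with 0 < γ < λ_min(Y) / (4‖SB‖·‖Q_p π*‖). Then, setting π = γ·π*, the matrix F̄(π) = A + B H̄(π) is Hurwitz. -/
open Matrix
noncomputable section

/-- Euclidean norm of a real vector. -/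
def evnorm {n : Type*} [Fintype n] (v : n → ℝ) : ℝ :=
  Real.sqrt (∑ i, (v i) ^ 2)

variable {np nc : ℕ}

/-! For an eigenpair `(μ, v)` of `F = A + B H̄`, the Lyapunov identity gives
`2 Re μ · v* S v = v* (Fᵀ S + S F) v = -v* Y v + 2 Re (v* S B H̄ v)`.
Since the matrices are real, each of these forms splits into the real forms at `Re v`
and `Im v`, where `x ⬝ Y x ≥ λ_min(Y) |x|²` and
`|x ⬝ S B H̄ x| ≤ ‖S B‖ ‖H̄‖ |x|² ≤ 2 γ ‖S B‖ ‖Q_p π*‖ |x|²`.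
The bound on `γ` makes the right-hand side negative, and `v* S v > 0` then forces `Re μ < 0`. -/

open scoped Matrix.Norms.L2Operator

section
variable {n : Type*} [Fintype n]

lemma opNorm_eq_l2_opNorm {m : Type*} [Fintype m] [DecidableEq n] (M : Matrix m n ℝ) :
    opNorm M = ‖M‖ := rfl

lemma evnorm_eq_norm_toLp (v : n → ℝ) : evnorm v = ‖WithLp.toLp 2 v‖ := by
  simp [evnorm, EuclideanSpace.norm_eq]

lemma abs_dotProduct_mulVec_le [DecidableEq n] (M : Matrix n n ℝ) (x : n → ℝ) :
    |x ⬝ᵥ M *ᵥ x| ≤ ‖M‖ * ‖WithLp.toLp 2 x‖ ^ 2 := by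
  rw [← inner_toEuclideanCLM M (WithLp.toLp 2 x) (WithLp.toLp 2 x)]
  calc _ ≤ ‖WithLp.toLp 2 x‖ * ‖toEuclideanCLM (𝕜 := ℝ) M (WithLp.toLp 2 x)‖ :=
        abs_real_inner_le_norm _ _
    _ ≤ ‖WithLp.toLp 2 x‖ * (‖M‖ * ‖WithLp.toLp 2 x‖) := by
        gcongr; exact (toEuclideanCLM (𝕜 := ℝ) M).le_opNorm _
    _ = _ := by ring

lemma l2_opNorm_le_norm_row [DecidableEq n] (R : Matrix (Fin 1) n ℝ) :
    ‖R‖ ≤ ‖WithLp.toLp 2 (R 0)‖ := by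
  rw [l2_opNorm_def]
  refine ContinuousLinearMap.opNorm_le_bound _ (norm_nonneg _) fun x => ?_
  calc _ = |R 0 ⬝ᵥ x.ofLp| := by
        simp [EuclideanSpace.norm_eq, mulVec, Real.sqrt_sq_eq_abs]
    _ = |inner ℝ (WithLp.toLp 2 (R 0)) x| := by
        simp [PiLp.inner_apply, dotProduct, mul_comm]
    _ ≤ _ := abs_real_inner_le_norm _ _

open Unitary in
lemma Matrix.IsHermitian.posSemidef_sub_iInf_eigenvalues_smul_one [DecidableEq n]
    {Y : Matrix n n ℝ} (hY : Y.IsHermitian) :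
    (Y - (⨅ i, hY.eigenvalues i) • (1 : Matrix n n ℝ)).PosSemidef := by
  set c := ⨅ i, hY.eigenvalues i
  have hshift : Y - c • (1 : Matrix n n ℝ) =
      conjStarAlgAut ℝ _ hY.eigenvectorUnitary (diagonal fun i => hY.eigenvalues i - c) := by
    conv_lhs => rw [hY.spectral_theorem]
    rw [← map_one (conjStarAlgAut ℝ _ hY.eigenvectorUnitary), ← map_smul, ← map_sub]
    congr 1
    ext i j
    by_cases h : i = j <;> simp [diagonal, h]
  rw [hshift]
  simp only [conjStarAlgAut_apply, isUnit_coe.posSemidef_star_right_conjugate_iff,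
    posSemidef_diagonal_iff, sub_nonneg]
  exact fun i => ciInf_le (Finite.bddBelow_range _) i

lemma Matrix.IsHermitian.iInf_eigenvalues_mul_le_dotProduct_mulVec [DecidableEq n]
    {Y : Matrix n n ℝ} (hY : Y.IsHermitian) (x : n → ℝ) :
    (⨅ i, hY.eigenvalues i) * ‖WithLp.toLp 2 x‖ ^ 2 ≤ x ⬝ᵥ Y *ᵥ x := by
  have := hY.posSemidef_sub_iInf_eigenvalues_smul_one.dotProduct_mulVec_nonneg x
  rw [EuclideanSpace.real_norm_sq_eq]
  simp only [star_trivial, sub_mulVec, smul_mulVec, one_mulVec, dotProduct_sub,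
    dotProduct_smul, smul_eq_mul, sub_nonneg] at this
  simpa [dotProduct, sq] using this

lemma re_star_dotProduct_map_ofReal_mulVec (M : Matrix n n ℝ) (v : n → ℂ) :
    (star v ⬝ᵥ M.map Complex.ofReal *ᵥ v).re =
      (fun i => (v i).re) ⬝ᵥ M *ᵥ (fun i => (v i).re) +
        (fun i => (v i).im) ⬝ᵥ M *ᵥ (fun i => (v i).im) := by
  simp only [dotProduct, mulVec, Matrix.map_apply, Pi.star_apply, Finset.mul_sum,
    ← Finset.sum_add_distrib, Complex.re_sum]
  refine Finset.sum_congr rfl fun i _ => Finset.sum_congr rfl fun j _ => ?_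
  simp only [Complex.star_def, Complex.mul_re, Complex.mul_im, Complex.conj_re, Complex.conj_im,
    Complex.ofReal_re, Complex.ofReal_im]
  ring

lemma re_star_dotProduct_map_ofReal_mulVec_pos {M : Matrix n n ℝ}
    (hM : ∀ x, x ≠ 0 → 0 < x ⬝ᵥ M *ᵥ x) {v : n → ℂ} (hv : v ≠ 0) :
    0 < (star v ⬝ᵥ M.map Complex.ofReal *ᵥ v).re := by
  have hM' (x : n → ℝ) : 0 ≤ x ⬝ᵥ M *ᵥ x := by
    rcases eq_or_ne x 0 with rfl | hx
    · simp
    · exact (hM x hx).le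
  rw [re_star_dotProduct_map_ofReal_mulVec]
  by_cases hre : (fun i => (v i).re) = 0
  · have him : (fun i => (v i).im) ≠ 0 := fun him =>
      hv (funext fun i => Complex.ext (congrFun hre i) (congrFun him i))
    linarith [hM' fun i => (v i).re, hM _ him]
  · linarith [hM _ hre, hM' fun i => (v i).im]

lemma star_dotProduct_lyapunov_mulVec_of_mulVec_eq_smul {F S : Matrix n n ℝ} {μ : ℂ}
    {v : n → ℂ} (hv : F.map Complex.ofReal *ᵥ v = μ • v) :
    star v ⬝ᵥ (Fᵀ * S + S * F).map Complex.ofReal *ᵥ v =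
      (2 * μ.re : ℝ) * (star v ⬝ᵥ S.map Complex.ofReal *ᵥ v) := by
  have hFt : (Fᵀ).map Complex.ofReal = (F.map Complex.ofReal)ᴴ := by
    rw [← conjTranspose_eq_transpose_of_trivial, conjTranspose_map]
    exact fun x => (Complex.conj_ofReal x).symm
  have hmul (P R : Matrix n n ℝ) :
      (P * R).map Complex.ofReal = P.map Complex.ofReal * R.map Complex.ofReal :=
    Matrix.map_mul (f := Complex.ofRealHom)
  rw [Matrix.map_add _ Complex.ofReal_add, hmul, hmul, add_mulVec, ← mulVec_mulVec,
    ← mulVec_mulVec, dotProduct_add, hFt, dotProduct_mulVec (star v), ← star_mulVec, hv,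
    mulVec_smul, star_smul, smul_dotProduct, dotProduct_smul, ← add_smul, add_comm,
    Complex.star_def, Complex.add_conj, smul_eq_mul]

theorem isHurwitz_of_lyapunov {F S : Matrix n n ℝ} (hS : ∀ x, x ≠ 0 → 0 < x ⬝ᵥ S *ᵥ x)
    (hF : ∀ x, x ≠ 0 → 0 < x ⬝ᵥ (-(Fᵀ * S + S * F)) *ᵥ x) : IsHurwitz F := by
  intro μ v hv hμ
  have hdecay := re_star_dotProduct_map_ofReal_mulVec_pos hF hv
  have henergy := re_star_dotProduct_map_ofReal_mulVec_pos hS hv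
  rw [Matrix.map_neg _ Complex.ofReal_neg, neg_mulVec, dotProduct_neg, Complex.neg_re,
    star_dotProduct_lyapunov_mulVec_of_mulVec_eq_smul hμ, Complex.re_ofReal_mul] at hdecay
  nlinarith

lemma neg_lyapunov_add_eq {A K S Y : Matrix n n ℝ} (hS : Sᵀ = S)
    (hA : Aᵀ * S + S * A = -Y) :
    -((A + K)ᵀ * S + S * (A + K)) = Y - ((S * K)ᵀ + S * K) := by
  rw [transpose_mul, hS, transpose_add, add_mul, mul_add,
    add_add_add_comm, hA]
  abel

lemma dotProduct_mulVec_pos_of_two_mul_l2_opNorm_lt [DecidableEq n] {Y K : Matrix n n ℝ}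
    (hY : Y.IsHermitian) (hK : 2 * ‖K‖ < ⨅ i, hY.eigenvalues i) {x : n → ℝ}
    (hx : x ≠ 0) :
    0 < x ⬝ᵥ (Y - (Kᵀ + K)) *ᵥ x := by
  have hx' : 0 < ‖WithLp.toLp 2 x‖ ^ 2 :=
    pow_pos (norm_pos_iff.mpr ((WithLp.toLp_eq_zero 2).not.mpr hx)) 2
  have hYx := hY.iInf_eigenvalues_mul_le_dotProduct_mulVec x
  have hKx := le_of_abs_le (abs_dotProduct_mulVec_le K x)
  rw [sub_mulVec, add_mulVec, dotProduct_sub, dotProduct_add, dotProduct_transpose_mulVec]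
  nlinarith

end

lemma norm_toLp_Hbar_row (Qp : Matrix (Fin np) (Fin np) ℝ) (π : Fin np → ℝ) :
    ‖WithLp.toLp 2 (Hbar (nc := nc) Qp π 0)‖ = 2 * ‖WithLp.toLp 2 (π ᵥ* Qp)‖ := by
  simp only [EuclideanSpace.norm_eq, Fintype.sum_sum_type, Hbar, of_apply, Sum.elim_inl,
    Sum.elim_inr, Real.norm_eq_abs, sq_abs, mul_pow, ← Finset.mul_sum]
  simp [Real.sqrt_mul]

lemma l2_opNorm_Hbar_le {Qp : Matrix (Fin np) (Fin np) ℝ} (hQp : Qp.IsSymm)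
    (π : Fin np → ℝ) : ‖Hbar (nc := nc) Qp π‖ ≤ 2 * ‖WithLp.toLp 2 (Qp *ᵥ π)‖ :=
  calc _ ≤ _ := l2_opNorm_le_norm_row _
    _ = 2 * ‖WithLp.toLp 2 (π ᵥ* Qp)‖ := norm_toLp_Hbar_row Qp π
    _ = _ := by rw [← mulVec_transpose, hQp]

theorem Fbar_hurwitz_of_scaled_pi_general
    (Ap : Matrix (Fin np) (Fin np) ℝ) (Ac : Matrix (Fin nc) (Fin nc) ℝ)
    (Bp : Matrix (Fin np) (Fin 1) ℝ) (Bc : Matrix (Fin nc) (Fin 1) ℝ)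
    (Cc : Matrix (Fin 1) (Fin nc) ℝ) (Dc : ℝ)
    (Qp : Matrix (Fin np) (Fin np) ℝ) (hQp : Qp.IsSymm)
    (Y S : Matrix (Fin np ⊕ Fin nc) (Fin np ⊕ Fin nc) ℝ) (hY : Y.PosDef) (hS : S.PosDef)
    (hLyap : (Amat Ap Ac Bp Cc)ᵀ * S + S * Amat Ap Ac Bp Cc = -Y)
    (πstar : Fin np → ℝ)
    (γ : ℝ) (hγ0 : 0 < γ)
    (hγ : γ < (⨅ i, hY.1.eigenvalues i) /
      (4 * opNorm (S * Bmat Bp Bc Dc) * evnorm (Qp *ᵥ πstar))) :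
    IsHurwitz (Fbar Ap Ac Bp Bc Cc Dc Qp (γ • πstar)) := by
  set B := Bmat Bp Bc Dc
  set H := Hbar (nc := nc) Qp (γ • πstar)
  set q := WithLp.toLp 2 (Qp *ᵥ πstar)
  rw [opNorm_eq_l2_opNorm, evnorm_eq_norm_toLp] at hγ
  have hH : ‖H‖ ≤ 2 * γ * ‖q‖ := by
    calc ‖H‖ ≤ 2 * ‖WithLp.toLp 2 (Qp *ᵥ (γ • πstar))‖ := l2_opNorm_Hbar_le hQp _
      _ = 2 * γ * ‖q‖ := by
        rw [mulVec_smul, WithLp.toLp_smul, norm_smul, Real.norm_of_nonneg hγ0.le, mul_assoc]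
  -- A zero denominator would turn `hγ` into `γ < 0`, since `x / 0 = 0`.
  have hden : 0 < 4 * ‖S * B‖ * ‖q‖ := by
    refine (by positivity : (0 : ℝ) ≤ _).lt_of_ne fun h => ?_
    rw [← h, div_zero] at hγ
    linarith
  have hgain : 2 * ‖S * (B * H)‖ < ⨅ i, hY.1.eigenvalues i :=
    calc 2 * ‖S * (B * H)‖ ≤ 2 * (‖S * B‖ * ‖H‖) := by
          rw [← Matrix.mul_assoc]; gcongr; exact l2_opNorm_mul _ _
      _ ≤ 2 * (‖S * B‖ * (2 * γ * ‖q‖)) := by gcongr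
      _ = γ * (4 * ‖S * B‖ * ‖q‖) := by ring
      _ < _ := (lt_div_iff₀ hden).mp hγ
  have hSt : Sᵀ = S := by simpa using hS.isHermitian.eq
  refine isHurwitz_of_lyapunov (fun x hx => by simpa using hS.dotProduct_mulVec_pos hx)
    fun x hx => ?_
  rw [show Fbar Ap Ac Bp Bc Cc Dc Qp (γ • πstar) = Amat Ap Ac Bp Cc + B * H from rfl,
    neg_lyapunov_add_eq hSt hLyap]
  exact dotProduct_mulVec_pos_of_two_mul_l2_opNorm_lt hY.isHermitian hgain hx

/-- Lemma 3, stability part: scaling `π = γ π*` with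
`0 < γ < λ_min(Y)/(4‖SB‖‖Q_p π*‖)` keeps `F̄(π) = A + B H̄(π)` Hurwitz. -/
theorem Fbar_hurwitz_of_scaled_pi
    (Ap : Matrix (Fin np) (Fin np) ℝ) (Ac : Matrix (Fin nc) (Fin nc) ℝ)
    (Bp : Matrix (Fin np) (Fin 1) ℝ) (Bc : Matrix (Fin nc) (Fin 1) ℝ)
    (Cc : Matrix (Fin 1) (Fin nc) ℝ) (Dc : ℝ)
    (Qp : Matrix (Fin np) (Fin np) ℝ) (hQp : Qp.IsSymm)
    (hA : IsHurwitz (Amat Ap Ac Bp Cc))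
    (Y S : Matrix (Fin np ⊕ Fin nc) (Fin np ⊕ Fin nc) ℝ) (hY : Y.PosDef) (hS : S.PosDef)
    (hLyap : (Amat Ap Ac Bp Cc)ᵀ * S + S * Amat Ap Ac Bp Cc = -Y)
    (πstar : Fin np → ℝ) (hπstar : Qp *ᵥ πstar ≠ 0)
    (γ : ℝ) (hγ0 : 0 < γ)
    (hγ : γ < (⨅ i, hY.1.eigenvalues i) /
      (4 * opNorm (S * Bmat Bp Bc Dc) * evnorm (Qp *ᵥ πstar))) :
    IsHurwitz (Fbar Ap Ac Bp Bc Cc Dc Qp (γ • πstar)) :=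
  Fbar_hurwitz_of_scaled_pi_general Ap Ac Bp Bc Cc Dc Qp hQp Y S hY hS hLyap πstar γ hγ0 hγ
end
end
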